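/- arXiv:1502.04776 — 2 statements merged into one kernel-verified Lean document; each statement's English description precedes it below -/
import Mathlib

section
/- If n is a prime, then the number of normal subgroups of ZM(m,n,r) equals τ(m) + 1, where τ denotes the number-of-divisors function. (Here m > 1 and r has multiplicative order n modulo m, i.e., the group is nonabelian.) -/
def ZMrels (m n : ℕ) (r : ℤ) : Set (FreeGroup Bool) :=
  {FreeGroup.of true ^ m, FreeGroup.of false ^ n,
   (FreeGroup.of false)⁻¹ * FreeGroup.of true * FreeGroup.of false * (FreeGroup.of true) ^ (-r)}

abbrev ZM (m n : ℕ) (r : ℤ) : Type := PresentedGroup (ZMrels m n r)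

def ZMa (m n : ℕ) (r : ℤ) : ZM m n r := PresentedGroup.of true

def ZMb (m n : ℕ) (r : ℤ) : ZM m n r := PresentedGroup.of false

/-!
Every element `x` of `ZM m n r` can be written `y * b ^ k` with `y ∈ ⟨a⟩`, and then
`x⁻¹ * z * x = z ^ r ^ k` for `z ∈ ⟨a⟩`. Hence every subgroup of the cyclic group `⟨a⟩` is normal, and
there are `τ m` of them. A normal subgroup not inside `⟨a⟩` contains some `y * b ^ k` with
`n ∤ k`, hence the commutator `a ^ (r ^ k - 1)`; as `r ^ k - 1` is a unit modulo `m`, it contains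
`a`, then `b ^ k`, and, `n` being prime, `b`: it is the whole group. That `a` has order `m` and
`b ∉ ⟨a⟩` is read off the action `a ↦ (· + 1)`, `b ↦ (r⁻¹ * ·)` of the group on `ZMod m`.
-/

theorem isUnit_pow_sub_one_of_coprime {R : Type*} [CommRing R] {x : R} {n k : ℕ}
    (hx : x ^ n = 1) (h : IsUnit (x - 1)) (hk : k.Coprime n) : IsUnit (x ^ k - 1) := by
  obtain ⟨j, hj⟩ :=
    exists_pow_eq_self_of_coprime (hk.coprime_dvd_right (orderOf_dvd_of_pow_eq_one hx))
  refine isUnit_of_dvd_unit ?_ h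
  simpa [hj] using sub_dvd_pow_sub_pow (x ^ k) 1 j

open Subgroup

section

variable {G : Type*} [Group G] {a b : G} {r : ℤ} {n : ℕ}

theorem mem_zpowers_zpow_of_isUnit {x : G} {t : ℤ} (ht : IsUnit (t : ZMod (orderOf x))) :
    x ∈ zpowers (x ^ t) := by
  obtain ⟨w, hw⟩ := ht.exists_right_inv
  refine ⟨w.cast, ?_⟩
  simp only [← zpow_mul]
  conv_rhs => rw [← zpow_one x]
  rw [zpow_eq_zpow_iff_modEq, ← ZMod.intCast_eq_intCast_iff]
  push_cast
  exact hw

theorem IsCyclic.card_subgroup [IsCyclic G] [Finite G] :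
    Nat.card (Subgroup G) = (Nat.card G).divisors.card := by
  let _ := IsCyclic.commGroup (α := G)
  have hker (H : Subgroup G) : (powMonoidHom (Nat.card H) : G →* G).ker = H := by
    refine (eq_of_le_of_card_ge (fun x hx => ?_) ?_).symm
    · exact congrArg Subtype.val (pow_card_eq_one' (x := (⟨x, hx⟩ : H)))
    · rw [IsCyclic.card_powMonoidHom_ker, Nat.gcd_eq_right H.card_subgroup_dvd_card]
  let e : Subgroup G ≃ (Nat.card G).divisors :=
    { toFun H := ⟨Nat.card H, Nat.mem_divisors.mpr ⟨H.card_subgroup_dvd_card, Nat.card_pos.ne'⟩⟩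
      invFun d := (powMonoidHom d.1 : G →* G).ker
      left_inv H := hker H
      right_inv d := Subtype.ext <| by
        change Nat.card (powMonoidHom d.1 : G →* G).ker = d
        rw [IsCyclic.card_powMonoidHom_ker, Nat.gcd_eq_right (Nat.dvd_of_mem_divisors d.2)] }
  rw [Nat.card_congr e, Nat.card_eq_fintype_card, Fintype.card_coe]

theorem card_subgroups_le_zpowers (ha : IsOfFinOrder a) :
    Nat.card {H : Subgroup G // H ≤ zpowers a} = (orderOf a).divisors.card := by
  have : Finite (zpowers a) := ha.finite_zpowers
  rw [← Nat.card_congr (MapSubtype.orderIso (zpowers a)).toEquiv, IsCyclic.card_subgroup,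
    Nat.card_zpowers]

theorem inv_mul_mul_eq_zpow_of_mem_zpowers (hab : b⁻¹ * a * b = a ^ r) {y : G}
    (hy : y ∈ zpowers a) : b⁻¹ * y * b = y ^ r := by
  obtain ⟨i, rfl⟩ := hy
  have h := conj_zpow (a := b⁻¹) (b := a) (i := i)
  rw [inv_inv, hab] at h
  rw [← h, ← zpow_mul, ← zpow_mul, mul_comm]

theorem inv_pow_mul_mul_pow_eq_zpow_of_mem_zpowers (hab : b⁻¹ * a * b = a ^ r) (k : ℕ) {y : G}
    (hy : y ∈ zpowers a) : b⁻¹ ^ k * y * b ^ k = y ^ r ^ k := by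
  induction k generalizing y with
  | zero => simp
  | succ k ih =>
    calc b⁻¹ ^ (k + 1) * y * b ^ (k + 1) = b⁻¹ ^ k * (b⁻¹ * y * b) * b ^ k := by group
      _ = y ^ r ^ (k + 1) := by
        rw [inv_mul_mul_eq_zpow_of_mem_zpowers hab hy, ih (zpow_mem hy r), ← zpow_mul, pow_succ']

theorem intCast_pow_eq_one_of_inv_mul_mul_eq_zpow (hab : b⁻¹ * a * b = a ^ r) (hb : b ^ n = 1) :
    (r : ZMod (orderOf a)) ^ n = 1 := by
  have h := inv_pow_mul_mul_pow_eq_zpow_of_mem_zpowers hab n (mem_zpowers a)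
  rw [inv_pow, hb, inv_one, one_mul, mul_one, ← zpow_one a, ← zpow_mul, one_mul,
    eq_comm, zpow_eq_zpow_iff_modEq, ← ZMod.intCast_eq_intCast_iff] at h
  exact_mod_cast h

theorem exists_mem_zpowers_mul_pow (hgen : closure {a, b} = ⊤) (hab : b⁻¹ * a * b = a ^ r)
    (hb : b ^ n = 1) (hn : n ≠ 0) (x : G) : ∃ y ∈ zpowers a, ∃ k : ℕ, x = y * b ^ k := by
  have hb' : b ^ (n - 1) = b⁻¹ := eq_inv_of_mul_eq_one_left (by rw [pow_sub_one_mul hn, hb])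
  have hconj {y : G} (hy : y ∈ zpowers a) : b * y * b⁻¹ ∈ zpowers a := by
    have h := inv_pow_mul_mul_pow_eq_zpow_of_mem_zpowers hab (n - 1) hy
    rw [inv_pow, hb', inv_inv] at h
    exact h ▸ zpow_mem hy _
  have hx : x ∈ closure {a, b} := hgen ▸ mem_top x
  induction hx using closure_induction_left with
  | one => exact ⟨1, one_mem _, 0, by simp⟩
  | mul_left g hg x _ ih =>
    obtain ⟨y, hy, k, rfl⟩ := ih
    rcases hg with rfl | rfl
    · exact ⟨g * y, mul_mem (mem_zpowers g) hy, k, by group⟩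
    · exact ⟨g * y * g⁻¹, hconj hy, k + 1, by group⟩
  | inv_mul_cancel g hg x _ ih =>
    obtain ⟨y, hy, k, rfl⟩ := ih
    rcases hg with rfl | rfl
    · exact ⟨g⁻¹ * y, mul_mem (inv_mem (mem_zpowers g)) hy, k, by group⟩
    · refine ⟨g⁻¹ * y * g, ?_, n - 1 + k, by rw [pow_add, hb']; group⟩
      rw [inv_mul_mul_eq_zpow_of_mem_zpowers hab hy]
      exact zpow_mem hy r

theorem mul_pow_inv_mul_mul_eq_zpow (hab : b⁻¹ * a * b = a ^ r) {y z : G} (hy : y ∈ zpowers a)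
    (hz : z ∈ zpowers a) (k : ℕ) : (y * b ^ k)⁻¹ * z * (y * b ^ k) = z ^ r ^ k := by
  obtain ⟨i, rfl⟩ := hy
  obtain ⟨j, rfl⟩ := hz
  have hcomm : (a ^ i)⁻¹ * a ^ j * a ^ i = a ^ j := by group
  calc (a ^ i * b ^ k)⁻¹ * a ^ j * (a ^ i * b ^ k)
      = b⁻¹ ^ k * ((a ^ i)⁻¹ * a ^ j * a ^ i) * b ^ k := by group
    _ = (a ^ j) ^ r ^ k := by
      rw [hcomm, inv_pow_mul_mul_pow_eq_zpow_of_mem_zpowers hab k (zpow_mem (mem_zpowers a) j)]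

theorem normal_of_le_zpowers (hgen : closure {a, b} = ⊤) (hab : b⁻¹ * a * b = a ^ r)
    (hb : b ^ n = 1) (hn : n ≠ 0) {H : Subgroup G} (hH : H ≤ zpowers a) : H.Normal where
  conj_mem h hh g := by
    obtain ⟨y, hy, k, hg⟩ := exists_mem_zpowers_mul_pow hgen hab hb hn g⁻¹
    have h := mul_pow_inv_mul_mul_eq_zpow hab hy (hH hh) k
    rw [← hg, inv_inv] at h
    exact h ▸ zpow_mem hh _

theorem eq_top_of_normal_of_not_le_zpowers (hgen : closure {a, b} = ⊤)
    (hab : b⁻¹ * a * b = a ^ r) (hb : b ^ n = 1) (hn : n.Prime)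
    (hr : IsUnit ((r : ZMod (orderOf a)) - 1)) {N : Subgroup G} [N.Normal]
    (hN : ¬ N ≤ zpowers a) : N = ⊤ := by
  obtain ⟨x, hxN, hxa⟩ := SetLike.not_le_iff_exists.mp hN
  obtain ⟨y, hy, k, rfl⟩ := exists_mem_zpowers_mul_pow hgen hab hb hn.ne_zero x
  have hk : k.Coprime n := by
    refine Nat.coprime_comm.mp ((Nat.Prime.coprime_iff_not_dvd hn).mpr fun ⟨j, hj⟩ => hxa ?_)
    rwa [hj, pow_mul, hb, one_pow, mul_one]
  have haN : a ∈ N := by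
    have hcomm : a ^ (r ^ k - 1) ∈ N := by
      have h := mul_pow_inv_mul_mul_eq_zpow hab hy (mem_zpowers a) k
      rw [zpow_sub_one, ← h, mul_assoc, mul_assoc]
      exact mul_mem (inv_mem hxN) (by simpa [mul_assoc] using Normal.conj_mem ‹_› _ hxN a)
    refine zpowers_le.mpr hcomm (mem_zpowers_zpow_of_isUnit ?_)
    push_cast
    exact isUnit_pow_sub_one_of_coprime (intCast_pow_eq_one_of_inv_mul_mul_eq_zpow hab hb) hr hk
  have hbkN : b ^ k ∈ N := by
    simpa using mul_mem (inv_mem (zpowers_le.mpr haN hy)) hxN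
  have hbN : b ∈ N := by
    obtain ⟨j, hj⟩ :=
      exists_pow_eq_self_of_coprime (hk.coprime_dvd_right (orderOf_dvd_of_pow_eq_one hb))
    exact hj ▸ pow_mem hbkN j
  rw [eq_top_iff, ← hgen, closure_le]
  rintro g (rfl | rfl)
  exacts [haN, hbN]

theorem card_normal_subgroups_eq_divisors_card_add_one (hgen : closure {a, b} = ⊤)
    (hab : b⁻¹ * a * b = a ^ r) (hb : b ^ n = 1) (hn : n.Prime) (ha : IsOfFinOrder a)
    (hba : b ∉ zpowers a) (hr : IsUnit ((r : ZMod (orderOf a)) - 1)) :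
    Nat.card {H : Subgroup G // H.Normal} = (orderOf a).divisors.card + 1 := by
  set S := {H : Subgroup G | H ≤ zpowers a}
  have hnormal : {H : Subgroup G | H.Normal} = insert ⊤ S := by
    ext H
    constructor
    · intro (hH : H.Normal)
      by_cases hle : H ≤ zpowers a
      · exact Or.inr hle
      · exact Or.inl (eq_top_of_normal_of_not_le_zpowers hgen hab hb hn hr hle)
    · rintro (rfl | hle)
      exacts [normal_top, normal_of_le_zpowers hgen hab hb hn.ne_zero hle]
  have htop : ⊤ ∉ S := fun h => hba (h (mem_top b))
  have hcard : Nat.card S = (orderOf a).divisors.card := card_subgroups_le_zpowers ha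
  have hfin : S.Finite := Set.finite_coe_iff.mp <| Nat.finite_of_card_ne_zero <| hcard ▸
    Finset.card_ne_zero.mpr (Nat.nonempty_divisors.mpr ha.orderOf_pos.ne')
  calc Nat.card {H : Subgroup G // H.Normal} = Nat.card ↥(insert ⊤ S) := by rw [← hnormal]; rfl
    _ = Nat.card S + 1 := by
      rw [Nat.card_coe_set_eq, Nat.card_coe_set_eq, Set.ncard_insert_of_notMem htop hfin]
    _ = (orderOf a).divisors.card + 1 := by rw [hcard]

end

namespace ZM

variable {m n : ℕ} {r : ℤ}

theorem closure_ZMa_ZMb : closure {ZMa m n r, ZMb m n r} = ⊤ := by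
  rw [← PresentedGroup.closure_range_of (ZMrels m n r)]
  congr 1
  ext x
  simp [ZMa, ZMb, or_comm]

theorem ZMa_pow_eq_one : ZMa m n r ^ m = 1 :=
  PresentedGroup.one_of_mem (x := FreeGroup.of true ^ m) (Or.inl rfl)

theorem ZMb_pow_eq_one : ZMb m n r ^ n = 1 :=
  PresentedGroup.one_of_mem (x := FreeGroup.of false ^ n) (Or.inr (Or.inl rfl))

theorem ZMb_inv_mul_ZMa_mul_ZMb : (ZMb m n r)⁻¹ * ZMa m n r * ZMb m n r = ZMa m n r ^ r :=
  PresentedGroup.mk_eq_mk_of_mul_inv_mem (by rw [← zpow_neg]; exact Or.inr (Or.inr rfl))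

def toPerm (hrn : (r : ZMod m) ^ n = 1) (hn : n ≠ 0) : ZM m n r →* Equiv.Perm (ZMod m) :=
  PresentedGroup.toGroup (f := fun g => if g then Equiv.addRight 1
    else MulAction.toPermHom (ZMod m)ˣ (ZMod m) (Units.ofPowEqOne _ n hrn hn)⁻¹) <| by
    rintro _ (rfl | rfl | rfl)
    · ext x; simp
    · rw [map_pow, FreeGroup.lift_apply_of, if_neg Bool.false_ne_true, ← map_pow, inv_pow,
        Units.pow_ofPowEqOne, inv_one, map_one]
    · have hr : (r : ZMod m) * ↑(Units.ofPowEqOne _ n hrn hn)⁻¹ = 1 :=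
        Units.mul_inv (Units.ofPowEqOne _ n hrn hn)
      ext x
      simp [Units.smul_def, -Units.val_inv_ofPowEqOne, ← mul_assoc, hr]

theorem toPerm_ZMa_zpow (hrn : (r : ZMod m) ^ n = 1) (hn : n ≠ 0) (k : ℤ) (x : ZMod m) :
    toPerm hrn hn (ZMa m n r ^ k) x = x + k := by
  simp [toPerm, ZMa]

theorem toPerm_ZMb (hrn : (r : ZMod m) ^ n = 1) (hn : n ≠ 0) (x : ZMod m) :
    toPerm hrn hn (ZMb m n r) x = ↑(Units.ofPowEqOne _ n hrn hn)⁻¹ * x := by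
  simp [toPerm, ZMb, Units.smul_def, -Units.val_inv_ofPowEqOne]

theorem orderOf_ZMa (hrn : (r : ZMod m) ^ n = 1) (hn : n ≠ 0) : orderOf (ZMa m n r) = m := by
  refine Nat.dvd_antisymm (orderOf_dvd_of_pow_eq_one ZMa_pow_eq_one)
    ((ZMod.natCast_eq_zero_iff _ m).mp ?_)
  have h := congrArg (toPerm hrn hn · 0) (pow_orderOf_eq_one (ZMa m n r))
  rw [← zpow_natCast, toPerm_ZMa_zpow] at h
  simpa using h

theorem ZMb_notMem_zpowers (hrn : (r : ZMod m) ^ n = 1) (hn : n ≠ 0) (hr1 : ¬ (m : ℤ) ∣ r - 1) :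
    ZMb m n r ∉ zpowers (ZMa m n r) := by
  rintro ⟨k, hk⟩
  have h0 := congrArg (toPerm hrn hn · 0) hk
  have h1 := congrArg (toPerm hrn hn · 1) hk
  simp only [toPerm_ZMa_zpow, toPerm_ZMb, zero_add, mul_zero, mul_one] at h0 h1
  rw [h0, add_zero, eq_comm, Units.val_eq_one, inv_eq_one] at h1
  have hr : (r : ZMod m) = 1 := by simpa using congrArg Units.val h1
  refine hr1 ((ZMod.intCast_zmod_eq_zero_iff_dvd _ _).mp ?_)
  rw [Int.cast_sub, hr, Int.cast_one, sub_self]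

end ZM

theorem stmt9_general (m n : ℕ) (r : ℤ) (hm : 0 < m)
    (hco2 : IsCoprime (m : ℤ) (r - 1))
    (hr : (m : ℤ) ∣ r ^ n - 1) (hnp : n.Prime)
    (hr1 : ¬ ((m : ℤ) ∣ r - 1)) :
    Nat.card {H : Subgroup (ZM m n r) // H.Normal} = m.divisors.card + 1 := by
  have hrn : (r : ZMod m) ^ n = 1 := by
    rw [← sub_eq_zero]
    exact_mod_cast (ZMod.intCast_zmod_eq_zero_iff_dvd _ m).mpr hr
  have ha := ZM.orderOf_ZMa hrn hnp.ne_zero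
  have hr_unit : IsUnit ((r : ZMod (orderOf (ZMa m n r))) - 1) := by
    rw [ha]
    simpa [isCoprime_zero_left] using hco2.map (Int.castRingHom (ZMod m))
  rw [card_normal_subgroups_eq_divisors_card_add_one ZM.closure_ZMa_ZMb
    ZM.ZMb_inv_mul_ZMa_mul_ZMb ZM.ZMb_pow_eq_one hnp
    (isOfFinOrder_iff_pow_eq_one.mpr ⟨m, hm, ZM.ZMa_pow_eq_one⟩)
    (ZM.ZMb_notMem_zpowers hrn hnp.ne_zero hr1) hr_unit, ha]

theorem stmt9 (m n : ℕ) (r : ℤ) (hm : 0 < m) (hn : 0 < n)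
    (hco : Nat.Coprime m n) (hco2 : IsCoprime (m : ℤ) (r - 1))
    (hr : (m : ℤ) ∣ r ^ n - 1) (hnp : n.Prime) (hm1 : 1 < m)
    (hr1 : ¬ ((m : ℤ) ∣ r - 1)) :
    Nat.card {H : Subgroup (ZM m n r) // H.Normal} = m.divisors.card + 1 :=
  stmt9_general m n r hm hco2 hr hnp hr1
end

section
/- If the lattice of normal subgroups of ZM(m,n,r) is a chain and m > 1, then gcd(m, r^k − 1) = 1 for all 1 ≤ k < n. -/
namespace ZM

variable {m n : ℕ} {r : ℤ}

section lift

variable {G : Type*} [Group G] (x y : G) (hx : x ^ m = 1) (hy : y ^ n = 1)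
  (hxy : y⁻¹ * x * y = x ^ r)

def lift : ZM m n r →* G :=
  PresentedGroup.toGroup (f := fun i => cond i x y) <| by
    simp only [ZMrels, Set.mem_insert_iff, Set.mem_singleton_iff]
    rintro w (rfl | rfl | rfl)
    · simpa using hx
    · simpa using hy
    · simp [hxy]

@[simp]
theorem lift_ZMa : lift x y hx hy hxy (ZMa m n r) = x :=
  PresentedGroup.toGroup.of _

@[simp]
theorem lift_ZMb : lift x y hx hy hxy (ZMb m n r) = y :=
  PresentedGroup.toGroup.of _

end lift

def toZMod (m n : ℕ) (r : ℤ) : ZM m n r →* Multiplicative (ZMod n) :=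
  lift 1 (Multiplicative.ofAdd 1) (one_pow m)
    (by rw [← ofAdd_nsmul, nsmul_one, ZMod.natCast_self, ofAdd_zero])
    (by simp)

theorem ZMa_mem_ker_toZMod : ZMa m n r ∈ (toZMod m n r).ker := by
  simp [toZMod]

theorem ZMb_pow_mem_ker_toZMod_iff {k : ℕ} :
    ZMb m n r ^ k ∈ (toZMod m n r).ker ↔ n ∣ k := by
  simp [toZMod, ← ofAdd_nsmul, ZMod.natCast_eq_zero_iff]

section affine

variable {R : Type*} [Ring R]

def affineRep (u : Rˣ) (hm : (m : R) = 0) (hn : u ^ n = 1) (hu : (u : R) = r) :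
    ZM m n r →* Equiv.Perm R :=
  lift (MulAction.toPermHom (Multiplicative R) R (.ofAdd 1)) (MulAction.toPermHom Rˣ R u⁻¹)
    (by rw [← map_pow, ← ofAdd_nsmul, nsmul_one, hm, ofAdd_zero, map_one])
    (by rw [← map_pow, inv_pow, hn, inv_one, map_one])
    (by
      rw [← map_inv, ← map_zpow, ← ofAdd_zsmul, zsmul_one, ← hu]
      ext z
      simp [Units.smul_def])

variable (u : Rˣ) (hm : (m : R) = 0) (hn : u ^ n = 1) (hu : (u : R) = r)

theorem ZMa_notMem_ker_affineRep [Nontrivial R] : ZMa m n r ∉ (affineRep u hm hn hu).ker := by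
  intro h
  simpa [affineRep] using congr($(MonoidHom.mem_ker.mp h) 0)

theorem ZMb_pow_mem_ker_affineRep {k : ℕ} (hk : u ^ k = 1) :
    ZMb m n r ^ k ∈ (affineRep u hm hn hu).ker := by
  rw [MonoidHom.mem_ker, map_pow, affineRep, lift_ZMb, ← map_pow, inv_pow, hk, inv_one, map_one]

end affine

end ZM

theorem exists_prime_natCast_eq_zero_and_intCast_eq_one {m : ℕ} {a : ℤ}
    (h : Int.gcd m (a - 1) ≠ 1) : ∃ p, p.Prime ∧ (m : ZMod p) = 0 ∧ (a : ZMod p) = 1 := by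
  obtain ⟨p, hp, hpgcd⟩ := Nat.exists_prime_and_dvd h
  have hpgcd : (p : ℤ) ∣ Int.gcd m (a - 1) := Int.natCast_dvd_natCast.mpr hpgcd
  refine ⟨p, hp, ?_, ?_⟩
  · exact_mod_cast (ZMod.intCast_zmod_eq_zero_iff_dvd _ p).mpr (hpgcd.trans (Int.gcd_dvd_left _ _))
  · simpa [sub_eq_zero] using
      (ZMod.intCast_zmod_eq_zero_iff_dvd _ p).mpr (hpgcd.trans (Int.gcd_dvd_right _ _))

theorem stmt14_general (m n : ℕ) (r : ℤ)
    (hr : (m : ℤ) ∣ r ^ n - 1)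
    (hchain : ∀ H K : Subgroup (ZM m n r), H.Normal → K.Normal → H ≤ K ∨ K ≤ H) :
    ∀ k : ℕ, 1 ≤ k → k < n → Int.gcd (m : ℤ) (r ^ k - 1) = 1 := by
  intro k hk hkn
  by_contra hgcd
  obtain ⟨p, hp, hm, hrk⟩ := exists_prime_natCast_eq_zero_and_intCast_eq_one hgcd
  push_cast at hrk
  have hrn : (r : ZMod p) ^ n = 1 := by
    simpa [hm, sub_eq_zero] using map_dvd (Int.castRingHom (ZMod p)) hr
  have : Fact p.Prime := ⟨hp⟩
  let u := Units.ofPowEqOne _ k hrk (by omega)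
  have hu : (u : ZMod p) = r := Units.val_ofPowEqOne _ _ _ _
  have hun : u ^ n = 1 := Units.ext (by rw [Units.val_pow_eq_pow_val, hu, hrn, Units.val_one])
  rcases hchain _ _ (ZM.toZMod m n r).normal_ker (ZM.affineRep u hm hun hu).normal_ker with h | h
  · exact ZM.ZMa_notMem_ker_affineRep u hm hun hu (h ZM.ZMa_mem_ker_toZMod)
  · have hnk := ZM.ZMb_pow_mem_ker_toZMod_iff.mp
      (h (ZM.ZMb_pow_mem_ker_affineRep u hm hun hu (Units.pow_ofPowEqOne _ _)))
    exact Nat.not_dvd_of_pos_of_lt hk hkn hnk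

theorem stmt14 (m n : ℕ) (r : ℤ) (hm : 0 < m) (hn : 0 < n)
    (hco : Nat.Coprime m n) (hco2 : IsCoprime (m : ℤ) (r - 1))
    (hr : (m : ℤ) ∣ r ^ n - 1)
    (hchain : ∀ H K : Subgroup (ZM m n r), H.Normal → K.Normal → H ≤ K ∨ K ≤ H) (hm1 : 1 < m) :
    ∀ k : ℕ, 1 ≤ k → k < n → Int.gcd (m : ℤ) (r ^ k - 1) = 1 :=
  stmt14_general m n r hr hchain
end
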